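/- Let G be a C_3^{(3)}-saturated 3-uniform hypergraph on n vertices and let u, v be distinct vertices with d(uv) = d(v) and d(v) ≤ n − 3. Then d(u) ≥ d(v) + 2. -/

import Mathlib

/-!
Codegree equal to degree means that every edge through `v` contains `u`, so the edges through `v`
cover at most `d(v) + 2` vertices and some `w` avoids all of them. Saturation at the non-edge
`uvw` yields an edge `f₀` through `u` but not `v`. If `f₀ = upq` were the only such edge,
saturation at the non-edge `vpq` would give two edges closing a loose triangle with `vpq`;
since `f₀` and `vpq` agree off `{u, v}`, trading `vpq` for `f₀` gives a loose triangle in `G`.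
-/

open Finset

variable {V : Type*}

/-- `E` is the edge set of a 3-uniform hypergraph: every edge has 3 vertices. -/
def IsUniform3 [DecidableEq V] (E : Finset (Finset V)) : Prop :=
  ∀ e ∈ E, e.card = 3

/-- `E` contains a copy of the loose cycle `C₃⁽³⁾`: three edges whose pairwise
intersections are three distinct single vertices, with empty triple intersection. -/
def HasC3 [DecidableEq V] (E : Finset (Finset V)) : Prop :=
  ∃ e₁ ∈ E, ∃ e₂ ∈ E, ∃ e₃ ∈ E, ∃ a b c : V,
    e₁ ∩ e₂ = {a} ∧ e₂ ∩ e₃ = {b} ∧ e₁ ∩ e₃ = {c} ∧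
    a ≠ b ∧ b ≠ c ∧ a ≠ c ∧ e₁ ∩ e₂ ∩ e₃ = ∅

/-- `E` is a `C₃⁽³⁾`-saturated 3-uniform hypergraph: it is 3-uniform, `C₃⁽³⁾`-free,
and adding any non-edge triple creates a copy of `C₃⁽³⁾`. -/
def IsSat3 [DecidableEq V] (E : Finset (Finset V)) : Prop :=
  IsUniform3 E ∧ ¬ HasC3 E ∧
    ∀ e : Finset V, e.card = 3 → e ∉ E → HasC3 (insert e E)

/-- The degree of a vertex: the number of edges containing it. -/
def deg [DecidableEq V] (E : Finset (Finset V)) (v : V) : ℕ :=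
  (E.filter fun e => v ∈ e).card

/-- The codegree of a pair of vertices: number of edges containing both. -/
def codeg [DecidableEq V] (E : Finset (Finset V)) (u v : V) : ℕ :=
  (E.filter fun e => u ∈ e ∧ v ∈ e).card

/-- `u` and `v` are distinct and share an edge (`v ∈ N(u)`). -/
def Adj [DecidableEq V] (E : Finset (Finset V)) (u v : V) : Prop :=
  u ≠ v ∧ ∃ e ∈ E, u ∈ e ∧ v ∈ e

/-- `e₁, e₂` form a `u,v`-link: a loose path of two edges from `u` to `v`. -/
def IsLink [DecidableEq V] (E : Finset (Finset V)) (u v : V) (e₁ e₂ : Finset V) : Prop :=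
  e₁ ∈ E ∧ e₂ ∈ E ∧ u ∈ e₁ ∧ v ∈ e₂ ∧ u ∉ e₂ ∧ v ∉ e₁ ∧
    ∃ w, w ∉ ({u, v} : Finset V) ∧ e₁ ∩ e₂ = {w}

/-- `uv` is a good pair: there exists a `u,v`-link. -/
def GoodPair [DecidableEq V] (E : Finset (Finset V)) (u v : V) : Prop :=
  ∃ e₁ e₂, IsLink E u v e₁ e₂

section

variable [DecidableEq V]

lemma eq_of_mem_of_inter_eq_singleton {s t : Finset V} {x y : V} (h : s ∩ t = {x})
    (hs : y ∈ s) (ht : y ∈ t) : y = x :=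
  mem_singleton.1 (h ▸ mem_inter.2 ⟨hs, ht⟩)

lemma mem_of_inter_eq_singleton {s t : Finset V} {x : V} (h : s ∩ t = {x}) : x ∈ s ∧ x ∈ t :=
  mem_inter.1 (h ▸ mem_singleton_self x)

def IsLooseTriangle (e₁ e₂ e₃ : Finset V) : Prop :=
  ∃ a b c : V, e₁ ∩ e₂ = {a} ∧ e₂ ∩ e₃ = {b} ∧ e₁ ∩ e₃ = {c} ∧ a ≠ b ∧ b ≠ c ∧ a ≠ c

namespace IsLooseTriangle

variable {e₁ e₂ e₃ : Finset V}

lemma swap₁₂ (h : IsLooseTriangle e₁ e₂ e₃) : IsLooseTriangle e₂ e₁ e₃ := by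
  obtain ⟨a, b, c, h₁₂, h₂₃, h₁₃, hab, hbc, hac⟩ := h
  exact ⟨a, c, b, by rwa [inter_comm], h₁₃, h₂₃, hac, hbc.symm, hab⟩

lemma swap₂₃ (h : IsLooseTriangle e₁ e₂ e₃) : IsLooseTriangle e₁ e₃ e₂ := by
  obtain ⟨a, b, c, h₁₂, h₂₃, h₁₃, hab, hbc, hac⟩ := h
  exact ⟨c, b, a, h₁₃, by rwa [inter_comm], h₁₂, hbc.symm, hab.symm, hac.symm⟩

lemma ne₁₂ (h : IsLooseTriangle e₁ e₂ e₃) : e₁ ≠ e₂ := by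
  rintro rfl
  obtain ⟨a, b, c, -, h₂₃, h₁₃, -, hbc, -⟩ := h
  exact hbc (singleton_inj.1 (h₂₃.symm.trans h₁₃))

lemma ne₁₃ (h : IsLooseTriangle e₁ e₂ e₃) : e₁ ≠ e₃ := h.swap₂₃.ne₁₂

lemma ne₂₃ (h : IsLooseTriangle e₁ e₂ e₃) : e₂ ≠ e₃ := h.swap₁₂.ne₁₃

end IsLooseTriangle

lemma hasC3_iff {E : Finset (Finset V)} :
    HasC3 E ↔ ∃ e₁ ∈ E, ∃ e₂ ∈ E, ∃ e₃ ∈ E, IsLooseTriangle e₁ e₂ e₃ := by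
  constructor
  · rintro ⟨e₁, h₁, e₂, h₂, e₃, h₃, a, b, c, h₁₂, h₂₃, h₁₃, hab, hbc, hac, -⟩
    exact ⟨e₁, h₁, e₂, h₂, e₃, h₃, a, b, c, h₁₂, h₂₃, h₁₃, hab, hbc, hac⟩
  · rintro ⟨e₁, h₁, e₂, h₂, e₃, h₃, a, b, c, h₁₂, h₂₃, h₁₃, hab, hbc, hac⟩
    refine ⟨e₁, h₁, e₂, h₂, e₃, h₃, a, b, c, h₁₂, h₂₃, h₁₃, hab, hbc, hac, ?_⟩
    refine eq_empty_of_forall_notMem fun x hx => hac ?_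
    have hxa : x ∈ e₁ ∩ e₂ := mem_of_mem_inter_left hx
    have hxc : x ∈ e₁ ∩ e₃ := inter_subset_inter_right inter_subset_left hx
    rw [h₁₂, mem_singleton] at hxa
    rw [h₁₃, mem_singleton] at hxc
    exact hxa.symm.trans hxc

lemma exists_isLooseTriangle_of_hasC3_insert {E : Finset (Finset V)} {e : Finset V}
    (hfree : ¬ HasC3 E) (h : HasC3 (insert e E)) :
    ∃ f ∈ E, ∃ g ∈ E, IsLooseTriangle e f g := by
  obtain ⟨e₁, h₁, e₂, h₂, e₃, h₃, hT⟩ := hasC3_iff.1 h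
  rcases mem_insert.1 h₁ with rfl | hE₁
  · exact ⟨e₂, (mem_insert.1 h₂).resolve_left hT.ne₁₂.symm,
      e₃, (mem_insert.1 h₃).resolve_left hT.ne₁₃.symm, hT⟩
  rcases mem_insert.1 h₂ with rfl | hE₂
  · exact ⟨e₁, hE₁, e₃, (mem_insert.1 h₃).resolve_left hT.ne₂₃.symm, hT.swap₁₂⟩
  rcases mem_insert.1 h₃ with rfl | hE₃
  · exact ⟨e₁, hE₁, e₂, hE₂, hT.swap₂₃.swap₁₂⟩
  exact (hfree (hasC3_iff.2 ⟨e₁, hE₁, e₂, hE₂, e₃, hE₃, hT⟩)).elim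

lemma IsSat3.exists_isLooseTriangle {E : Finset (Finset V)} {e : Finset V} (hsat : IsSat3 E)
    (he : e.card = 3) (heE : e ∉ E) : ∃ f ∈ E, ∃ g ∈ E, IsLooseTriangle e f g :=
  exists_isLooseTriangle_of_hasC3_insert hsat.2.1 (hsat.2.2 e he heE)

lemma deg_eq_codeg_add_card (E : Finset (Finset V)) (u v : V) :
    deg E u = codeg E u v + (E.filter fun e => u ∈ e ∧ v ∉ e).card := by
  rw [deg, codeg, ← card_filter_add_card_filter_not (s := E.filter (u ∈ ·)) (v ∈ ·),
    filter_filter, filter_filter]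

lemma mem_of_codeg_eq_deg {E : Finset (Finset V)} {u v : V} {e : Finset V}
    (h : codeg E u v = deg E v) (he : e ∈ E) (hv : v ∈ e) : u ∈ e := by
  have hsub : E.filter (fun e => u ∈ e ∧ v ∈ e) ⊆ E.filter (v ∈ ·) :=
    monotone_filter_right E fun _ _ => And.right
  have hmem : e ∈ E.filter (v ∈ ·) := mem_filter.2 ⟨he, hv⟩
  rw [← eq_of_subset_of_card_le hsub h.ge] at hmem
  exact (mem_filter.1 hmem).2.1

lemma exists_notMem_of_codeg_add_two_lt [Fintype V] {E : Finset (Finset V)} {u v : V}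
    (hE : IsUniform3 E) (huv : u ≠ v) (h : codeg E u v + 2 < Fintype.card V) :
    ∃ w, w ≠ u ∧ w ≠ v ∧ ∀ e ∈ E, u ∈ e → v ∈ e → w ∉ e := by
  set S := {u, v} ∪ (E.filter fun e => u ∈ e ∧ v ∈ e).biUnion (· \ {u, v})
  have hS : S.card ≤ 2 + codeg E u v * 1 := by
    refine (card_union_le _ _).trans (add_le_add card_le_two (card_biUnion_le_card_mul _ _ _ ?_))
    intro e he
    obtain ⟨he, hu, hv⟩ := mem_filter.1 he
    rw [card_sdiff_of_subset (insert_subset hu (singleton_subset_iff.2 hv)), hE e he,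
      card_pair huv]
  obtain ⟨w, -, hw⟩ := exists_mem_notMem_of_card_lt_card (s := S) (t := univ)
    (by rw [card_univ]; omega)
  simp only [S, mem_union, mem_insert, mem_singleton, mem_biUnion, mem_filter, mem_sdiff,
    not_or] at hw
  exact ⟨w, hw.1.1, hw.1.2, fun e he hu hv hwe => hw.2 ⟨e, ⟨he, hu, hv⟩, hwe, hw.1⟩⟩

lemma exists_mem_notMem_of_isSat3 {E : Finset (Finset V)} {u v w : V} (hsat : IsSat3 E)
    (hdom : ∀ e ∈ E, v ∈ e → u ∈ e) (huv : u ≠ v) (hwu : w ≠ u) (hwv : w ≠ v)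
    (hw : ∀ e ∈ E, v ∈ e → w ∉ e) : ∃ f ∈ E, u ∈ f ∧ v ∉ f := by
  set t : Finset V := {u, v, w}
  have ht : t.card = 3 := card_eq_three.2 ⟨u, v, w, huv, hwu.symm, hwv.symm, rfl⟩
  have htE : t ∉ E := fun h => hw t h (by simp [t]) (by simp [t])
  obtain ⟨f, hf, g, hg, a, -, c, hta, -, htc, -, -, hac⟩ := hsat.exists_isLooseTriangle ht htE
  have hne : ∀ h ∈ E, ∀ x, t ∩ h = {x} → x ≠ v := by
    rintro h hh x hx rfl
    exact huv (eq_of_mem_of_inter_eq_singleton hx (by simp [t])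
      (hdom h hh (mem_of_inter_eq_singleton hx).2))
  have hedge : ∀ h, t ∩ h = {u} → u ∈ h ∧ v ∉ h := fun h hx =>
    ⟨(mem_of_inter_eq_singleton hx).2,
      fun hv => huv (eq_of_mem_of_inter_eq_singleton hx (by simp [t]) hv).symm⟩
  have hau : a = u ∨ c = u := by
    have ha := (mem_of_inter_eq_singleton hta).1
    have hc := (mem_of_inter_eq_singleton htc).1
    have hav := hne f hf a hta
    have hcv := hne g hg c htc
    simp only [t, mem_insert, mem_singleton] at ha hc
    grind
  rcases hau with rfl | rfl
  · exact ⟨f, hf, hedge f hta⟩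
  · exact ⟨g, hg, hedge g htc⟩

section UniqueEdge

variable {E : Finset (Finset V)} {u v : V} {s f g : Finset V}

lemma notMem_of_insert_inter_eq_singleton (huniq : ∀ g ∈ E, u ∈ g → v ∉ g → g = insert u s)
    (hs : s.card = 2) (hg : g ∈ E) (hvg : v ∉ g) {x : V} (hx : insert v s ∩ g = {x}) :
    u ∉ g := by
  intro hug
  have hsub : s ⊆ {x} := by
    rw [← hx, huniq g hg hug hvg]
    exact subset_inter (subset_insert v s) (subset_insert u s)
  have := card_le_card hsub
  rw [hs, card_singleton] at this
  omega

lemma hasC3_of_isLooseTriangle_of_mem (hdom : ∀ e ∈ E, v ∈ e → u ∈ e)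
    (huniq : ∀ g ∈ E, u ∈ g → v ∉ g → g = insert u s) (hs : s.card = 2) (hus : u ∉ s)
    (hvs : v ∉ s) (hf₀ : insert u s ∈ E) (hf : f ∈ E) (hg : g ∈ E)
    (hT : IsLooseTriangle (insert v s) f g) (hvf : v ∈ f) : HasC3 E := by
  obtain ⟨a, b, c, hta, hfg, htc, hab, hbc, hac⟩ := hT
  obtain rfl : v = a := eq_of_mem_of_inter_eq_singleton hta (mem_insert_self v s) hvf
  have hvg : v ∉ g := fun h => hac (eq_of_mem_of_inter_eq_singleton htc (mem_insert_self v s) h)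
  have hug : u ∉ g := notMem_of_insert_inter_eq_singleton huniq hs hg hvg htc
  have hcs : c ∈ s := (mem_insert.1 (mem_of_inter_eq_singleton htc).1).resolve_left hac.symm
  have hsf : s ∩ f = ∅ := eq_empty_of_forall_notMem fun z hz => by
    obtain ⟨hzs, hzf⟩ := mem_inter.1 hz
    rw [eq_of_mem_of_inter_eq_singleton hta (mem_insert_of_mem hzs) hzf] at hzs
    exact hvs hzs
  rw [hasC3_iff]
  refine ⟨insert u s, hf₀, f, hf, g, hg, u, b, c, ?_, hfg, ?_,
    fun h => hug (h ▸ (mem_of_inter_eq_singleton hfg).2), hbc, fun h => hus (h ▸ hcs)⟩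
  · rw [insert_inter_of_mem (hdom f hf hvf), hsf, insert_empty]
  · rw [insert_inter_of_notMem hug, ← htc, insert_inter_of_notMem hvg]

lemma hasC3_of_isLooseTriangle_of_notMem (huniq : ∀ g ∈ E, u ∈ g → v ∉ g → g = insert u s)
    (hs : s.card = 2) (hf₀ : insert u s ∈ E) (hf : f ∈ E) (hg : g ∈ E)
    (hT : IsLooseTriangle (insert v s) f g) (hvf : v ∉ f) (hvg : v ∉ g) : HasC3 E := by
  obtain ⟨a, b, c, hta, hfg, htc, hab, hbc, hac⟩ := hT
  have huf : u ∉ f := notMem_of_insert_inter_eq_singleton huniq hs hf hvf hta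
  have hug : u ∉ g := notMem_of_insert_inter_eq_singleton huniq hs hg hvg htc
  rw [hasC3_iff]
  refine ⟨f, hf, insert u s, hf₀, g, hg, a, c, b, ?_, ?_, hfg, hac, hbc.symm, hab⟩
  · rw [inter_comm, insert_inter_of_notMem huf, ← hta, insert_inter_of_notMem hvf]
  · rw [insert_inter_of_notMem hug, ← htc, insert_inter_of_notMem hvg]

end UniqueEdge

lemma exists_ne_of_isSat3 {E : Finset (Finset V)} {u v : V} {f₀ : Finset V} (hsat : IsSat3 E)
    (hdom : ∀ e ∈ E, v ∈ e → u ∈ e) (huv : u ≠ v) (hf₀ : f₀ ∈ E) (hu : u ∈ f₀) (hv : v ∉ f₀) :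
    ∃ g ∈ E, u ∈ g ∧ v ∉ g ∧ g ≠ f₀ := by
  by_contra! huniq
  set s := f₀.erase u
  rw [← insert_erase hu] at hf₀ huniq
  have hs : s.card = 2 := by rw [card_erase_of_mem hu, hsat.1 f₀ (insert_erase hu ▸ hf₀)]
  have hus : u ∉ s := notMem_erase u f₀
  have hvs : v ∉ s := fun h => hv (mem_of_mem_erase h)
  have ht : (insert v s).card = 3 := by rw [card_insert_of_notMem hvs, hs]
  have htE : insert v s ∉ E := fun h =>
    (mem_insert.1 (hdom _ h (mem_insert_self v s))).elim huv hus
  obtain ⟨f, hf, g, hg, hT⟩ := hsat.exists_isLooseTriangle ht htE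
  refine hsat.2.1 ?_
  by_cases hvf : v ∈ f
  · exact hasC3_of_isLooseTriangle_of_mem hdom huniq hs hus hvs hf₀ hf hg hT hvf
  by_cases hvg : v ∈ g
  · exact hasC3_of_isLooseTriangle_of_mem hdom huniq hs hus hvs hf₀ hg hf hT.swap₂₃ hvg
  exact hasC3_of_isLooseTriangle_of_notMem huniq hs hf₀ hf hg hT hvf hvg

end

theorem codeg_eq_deg_imp_deg_ge {V : Type*} [Fintype V] [DecidableEq V]
    (E : Finset (Finset V)) (hsat : IsSat3 E) (u v : V) (huv : u ≠ v)
    (hcod : codeg E u v = deg E v)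
    (hdv : (deg E v : ℤ) ≤ (Fintype.card V : ℤ) - 3) :
    deg E v + 2 ≤ deg E u := by
  have hdom : ∀ e ∈ E, v ∈ e → u ∈ e := fun e he hv => mem_of_codeg_eq_deg hcod he hv
  obtain ⟨w, hwu, hwv, hw⟩ := exists_notMem_of_codeg_add_two_lt hsat.1 huv (by omega)
  obtain ⟨f, hf, huf, hvf⟩ := exists_mem_notMem_of_isSat3 hsat hdom huv hwu hwv
    fun e he hv => hw e he (hdom e he hv) hv
  obtain ⟨g, hg, hug, hvg, hgf⟩ := exists_ne_of_isSat3 hsat hdom huv hf huf hvf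
  have hcard : 1 < (E.filter fun e => u ∈ e ∧ v ∉ e).card :=
    one_lt_card.2 ⟨g, mem_filter.2 ⟨hg, hug, hvg⟩, f, mem_filter.2 ⟨hf, huf, hvf⟩, hgf⟩
  rw [deg_eq_codeg_add_card E u v, hcod]
  omega
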